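/- arXiv:1609.00373 — 3 statements merged into one kernel-verified Lean document; each statement's English description precedes it below -/
import Mathlib

section
/- Let G be a finite group generated by S. If every element of S has the same order k, then the G-graph Γ(G,S) is regular of degree k·(|S|−1). -/
/-- The right coset of the cyclic subgroup `⟨s⟩` containing `g`. -/
def rcoset {G : Type*} [Group G] (s g : G) : Set G := {x | ∃ k : ℤ, x = s ^ k * g}

/-- The finset of all right cosets of the cyclic subgroup `⟨s⟩` in a finite group `G`. -/
noncomputable def cosetsOf {G : Type*} [Group G] [Fintype G] (s : G) : Finset (Set G) :=
  @Finset.image _ _ (Classical.decEq _) (fun g => rcoset s g) Finset.univ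

/-- The degree (counting edge multiplicities) of the vertex `⟨s⟩g` in the G-graph `Γ(G,S)`. -/
noncomputable def gDeg {G : Type*} [Group G] [Fintype G] [DecidableEq G]
    (S : Finset G) (s g : G) : ℕ :=
  ∑ t ∈ S.erase s, ∑ C ∈ cosetsOf t, Nat.card ↥(rcoset s g ∩ C)

lemma mem_rcoset_self {G : Type*} [Group G] (s g : G) : g ∈ rcoset s g :=
  ⟨0, by simp⟩

lemma rcoset_eq_of_mem {G : Type*} [Group G] {t x y : G} (h : x ∈ rcoset t y) :
    rcoset t x = rcoset t y := by
  obtain ⟨n, rfl⟩ := h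
  ext z
  constructor
  · rintro ⟨m, rfl⟩
    exact ⟨m + n, by rw [zpow_add, mul_assoc]⟩
  · rintro ⟨m, rfl⟩
    exact ⟨m - n, by rw [← mul_assoc, ← zpow_add, sub_add_cancel]⟩

lemma card_rcoset {G : Type*} [Group G] (s g : G) :
    Nat.card (rcoset s g) = orderOf s := by
  have h : rcoset s g = (fun z => z * g) '' (Subgroup.zpowers s : Set G) := by
    ext x
    simp only [rcoset, Set.mem_setOf_eq, Set.mem_image, SetLike.mem_coe,
      Subgroup.mem_zpowers_iff]
    constructor
    · rintro ⟨n, rfl⟩; exact ⟨s ^ n, ⟨n, rfl⟩, rfl⟩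
    · rintro ⟨z, ⟨n, rfl⟩, rfl⟩; exact ⟨n, rfl⟩
  rw [h, Nat.card_image_of_injective (mul_left_injective g)]
  simp [Nat.card_zpowers s]

/-- if every generator in `S` has the same order `k`, then the G-graph
`Γ(G,S)` is regular of degree `k·(|S|−1)`. -/
theorem gGraph_regular {G : Type*} [Group G] [Fintype G] [DecidableEq G]
    (S : Finset G) (hS : Subgroup.closure (S : Set G) = ⊤)
    (k : ℕ) (hk : ∀ s ∈ S, orderOf s = k) :
    ∀ s ∈ S, ∀ g : G, gDeg S s g = k * (S.card - 1) := by
  classical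
  intro s hs g
  unfold gDeg
  have key : ∀ t ∈ S.erase s, ∑ C ∈ cosetsOf t, Nat.card ↥(rcoset s g ∩ C) = k := by
    intro t ht
    set A : Set G := rcoset s g with hA
    have hfib : ∀ x ∈ A.toFinset, rcoset t x ∈ cosetsOf t := by
      intro x _
      unfold cosetsOf
      exact Finset.mem_image.mpr ⟨x, Finset.mem_univ x, rfl⟩
    have hcard := Finset.card_eq_sum_card_fiberwise hfib
    have hAk : A.toFinset.card = k := by
      rw [Set.toFinset_card, ← Nat.card_eq_fintype_card, card_rcoset]
      exact hk s hs
    rw [← hAk, hcard]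
    refine Finset.sum_congr rfl fun C hC => ?_
    obtain ⟨y, -, rfl⟩ := Finset.mem_image.mp hC
    have hset : A ∩ rcoset t y = {x ∈ A.toFinset | rcoset t x = rcoset t y} := by
      ext x
      simp only [Set.mem_inter_iff, Finset.coe_filter, Set.mem_setOf_eq,
        Set.mem_toFinset]
      constructor
      · rintro ⟨h1, h2⟩; exact ⟨h1, rcoset_eq_of_mem h2⟩
      · rintro ⟨h1, h2⟩; exact ⟨h1, h2 ▸ mem_rcoset_self t x⟩
    rw [hset, Nat.card_coe_set_eq, Set.ncard_coe_finset]
  rw [Finset.sum_congr rfl key, Finset.sum_const, smul_eq_mul,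
    Finset.card_erase_of_mem hs, mul_comm]
end

section
/- Let D₂ₙ (n ≥ 3) be the dihedral group generated by two distinct reflections s and t with presentation ⟨s, t | s² = t² = e, (ts)ⁿ = e⟩. Then the G-graph Γ(D₂ₙ, {s,t}) is isomorphic to the cycle graph C₂ₙ. -/
/-- The G-graph `Γ(G, {s,t})` of a group with a two-element generating set, as a simple
graph: vertices are right cosets of `⟨s⟩` (left summand) and of `⟨t⟩` (right summand),
with an edge between a coset of `⟨s⟩` and a coset of `⟨t⟩` iff they intersect.
(Here all intersections have at most one element, so the multigraph is simple.) -/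
def gGraphPair {G : Type*} [Group G] (s t : G) :
    SimpleGraph ({C : Set G // ∃ g, C = rcoset s g} ⊕ {C : Set G // ∃ g, C = rcoset t g}) :=
  SimpleGraph.fromRel (fun v w => ∃ a b, v = Sum.inl a ∧ w = Sum.inr b ∧ (a.1 ∩ b.1).Nonempty)

/-- The cycle graph `Cₘ` on `ZMod m`. -/
def cycleG (m : ℕ) : SimpleGraph (ZMod m) :=
  SimpleGraph.fromRel (fun i j => j = i + 1)





section Aux
variable {G : Type*} [Group G]

lemma sq_one_zpow {s : G} (hs : s ^ 2 = 1) (k : ℤ) : s ^ k = 1 ∨ s ^ k = s := by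
  have h2 : s ^ (2 : ℤ) = 1 := by rw [show (2:ℤ) = ((2:ℕ):ℤ) by norm_num, zpow_natCast, hs]
  rcases Int.even_or_odd k with ⟨m, hm⟩ | ⟨m, hm⟩
  · left; rw [hm, ← two_mul, zpow_mul, h2, one_zpow]
  · right; rw [hm, zpow_add, zpow_mul, h2, one_zpow, one_mul, zpow_one]

lemma mem_rcoset_iff {s g x : G} (hs : s ^ 2 = 1) :
    x ∈ rcoset s g ↔ x = g ∨ x = s * g := by
  constructor
  · rintro ⟨k, rfl⟩
    rcases sq_one_zpow hs k with h | h <;> rw [h] <;> simp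
  · rintro (rfl | rfl)
    · exact ⟨0, by simp⟩
    · exact ⟨1, by simp⟩

lemma rcoset_smul {s g : G} : rcoset s (s * g) = rcoset s g := by
  ext x
  constructor
  · rintro ⟨k, rfl⟩; exact ⟨k + 1, by rw [zpow_add, zpow_one, mul_assoc]⟩
  · rintro ⟨k, rfl⟩; exact ⟨k - 1, by rw [zpow_sub, zpow_one, mul_assoc, inv_mul_cancel_left]⟩

lemma rcoset_eq_rep {s g g' : G} (hs : s ^ 2 = 1) (h : rcoset s g = rcoset s g') :
    g = g' ∨ g = s * g' := by
  have : g ∈ rcoset s g' := h ▸ ⟨0, by simp⟩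
  exact (mem_rcoset_iff hs).1 this

end Aux


section Dihedral
variable {G : Type*} [Group G]

lemma inv_of_sq (s : G) (hs : s ^ 2 = 1) : s⁻¹ = s := by
  rw [← mul_eq_one_iff_inv_eq, ← pow_two, hs]

lemma dih_conj {s t : G} (hs : s ^ 2 = 1) (ht : t ^ 2 = 1) (i : ℤ) :
    s * (t * s) ^ i = (t * s) ^ (-i) * s := by
  have hsi := inv_of_sq s hs
  have hti := inv_of_sq t ht
  have key : s * (t * s) * s⁻¹ = (t * s)⁻¹ := by
    rw [mul_inv_rev, hsi, hti, ← mul_assoc, mul_assoc (s*t), ← pow_two, hs, mul_one]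
  have h2 := conj_zpow (i := i) (a := s) (b := t * s)
  rw [key, inv_zpow, ← zpow_neg] at h2
  rw [h2, inv_mul_cancel_right]

lemma dih_classify {s t : G} (hs : s ^ 2 = 1) (ht : t ^ 2 = 1)
    (hgen : Subgroup.closure ({s, t} : Set G) = ⊤) (g : G) :
    ∃ i : ℤ, g = (t * s) ^ i ∨ g = (t * s) ^ i * s := by
  set r := t * s with hr
  have hsi := inv_of_sq s hs
  have hconj := dih_conj hs ht
  let H : Subgroup G :=
  { carrier := {x | ∃ i : ℤ, x = r ^ i ∨ x = r ^ i * s}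
    one_mem' := ⟨0, Or.inl (by simp)⟩
    mul_mem' := by
      rintro a b ⟨i, rfl | rfl⟩ ⟨j, rfl | rfl⟩
      · exact ⟨i + j, Or.inl (by rw [zpow_add])⟩
      · exact ⟨i + j, Or.inr (by rw [zpow_add, mul_assoc])⟩
      · refine ⟨i + -j, Or.inr ?_⟩
        rw [mul_assoc, hconj j, ← mul_assoc, ← zpow_add]
      · refine ⟨i + -j, Or.inl ?_⟩
        rw [mul_assoc, ← mul_assoc s, hconj j, mul_assoc (r ^ (-j)) s s, ← pow_two,
          hs, mul_one, ← zpow_add]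
    inv_mem' := by
      rintro a ⟨i, rfl | rfl⟩
      · exact ⟨-i, Or.inl (by rw [zpow_neg])⟩
      · refine ⟨i, Or.inr ?_⟩
        rw [mul_inv_rev, hsi, ← zpow_neg, hconj (-i), neg_neg] }
  have hsub : Subgroup.closure ({s, t} : Set G) ≤ H := by
    rw [Subgroup.closure_le]
    rintro x (rfl | rfl)
    · exact ⟨0, Or.inr (by simp)⟩
    · refine ⟨1, Or.inr ?_⟩
      rw [zpow_one, mul_assoc, ← pow_two, hs, mul_one]
  have : g ∈ H := hsub (hgen ▸ Subgroup.mem_top g)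
  exact this

end Dihedral


section Order
variable {G : Type*} [Group G] [Fintype G]

lemma dih_s_not_zpow {s t : G} {n : ℕ} (hn : 0 < n)
    (hs : s ^ 2 = 1) (ht : t ^ 2 = 1) (hts : (t * s) ^ n = 1)
    (hcard : Fintype.card G = 2 * n)
    (hgen : Subgroup.closure ({s, t} : Set G) = ⊤) :
    ∀ i : ℤ, s ≠ (t * s) ^ i := by
  intro i hsi
  set r := t * s with hr
  have hall : ∀ x : G, x ∈ Subgroup.zpowers r := by
    intro x
    obtain ⟨j, rfl | rfl⟩ := dih_classify hs ht hgen x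
    · exact ⟨j, rfl⟩
    · exact ⟨j + i, by show r ^ (j + i) = (t * s) ^ j * s; rw [← hr, zpow_add, ← hsi]⟩
  have h1 : orderOf r = Nat.card G := orderOf_eq_card_of_forall_mem_zpowers hall
  have h2 : orderOf r ∣ n := orderOf_dvd_of_pow_eq_one hts
  have h3 : orderOf r ≤ n := Nat.le_of_dvd hn h2
  rw [Nat.card_eq_fintype_card, hcard] at h1
  omega

lemma dih_orderOf {s t : G} {n : ℕ} (hn : 0 < n)
    (hs : s ^ 2 = 1) (ht : t ^ 2 = 1) (hts : (t * s) ^ n = 1)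
    (hcard : Fintype.card G = 2 * n)
    (hgen : Subgroup.closure ({s, t} : Set G) = ⊤) :
    orderOf (t * s) = n := by
  classical
  set r := t * s with hr
  have h2 : orderOf r ∣ n := orderOf_dvd_of_pow_eq_one hts
  have h3 : orderOf r ≤ n := Nat.le_of_dvd hn h2
  have hsurj : Function.Surjective
      (fun p : (Subgroup.zpowers r) × Bool => if p.2 then (p.1 : G) * s else (p.1 : G)) := by
    intro g
    obtain ⟨j, rfl | rfl⟩ := dih_classify hs ht hgen g
    · exact ⟨(⟨r ^ j, j, rfl⟩, false), rfl⟩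
    · exact ⟨(⟨r ^ j, j, rfl⟩, true), rfl⟩
  have hle := Fintype.card_le_of_surjective _ hsurj
  rw [hcard, Fintype.card_prod, Fintype.card_bool, Fintype.card_zpowers] at hle
  omega

end Order

/-- for `n ≥ 3`, the G-graph of the dihedral group
`D₂ₙ = ⟨s, t | s² = t² = e, (ts)ⁿ = e⟩` of order `2n` generated by two distinct
reflections `s, t` is isomorphic to the cycle graph `C₂ₙ`. -/
theorem gGraph_dihedral_two_reflections {G : Type*} [Group G] [Fintype G]
    (n : ℕ) (hn : 3 ≤ n) (s t : G) (hne : s ≠ t)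
    (hs : s ^ 2 = 1) (hs1 : s ≠ 1) (ht : t ^ 2 = 1) (ht1 : t ≠ 1)
    (hts : (t * s) ^ n = 1) (hcard : Fintype.card G = 2 * n)
    (hgen : Subgroup.closure ({s, t} : Set G) = ⊤) :
    Nonempty (gGraphPair s t ≃g cycleG (2 * n)) := by
  have hn0 : 0 < n := by omega
  set r : G := t * s with hr
  have hconj : ∀ i : ℤ, s * r ^ i = r ^ (-i) * s := dih_conj hs ht
  have hord : orderOf r = n := dih_orderOf hn0 hs ht hts hcard hgen
  have hsnp : ∀ i : ℤ, s ≠ r ^ i := dih_s_not_zpow hn0 hs ht hts hcard hgen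
  have cross : ∀ a b : ℕ, r ^ a ≠ s * r ^ b := by
    intro a b h
    apply hsnp ((a : ℤ) - (b : ℤ))
    rw [zpow_sub, zpow_natCast, zpow_natCast]
    exact eq_mul_inv_iff_mul_eq.mpr h.symm
  have hpow_iff : ∀ a b : ℕ, r ^ a = r ^ b ↔ a ≡ b [MOD n] := by
    intro a b; rw [pow_eq_pow_iff_modEq, hord]
  have htmul : ∀ b : ℕ, t * (s * r ^ b) = r ^ (b + 1) := by
    intro b; rw [← mul_assoc, ← hr, pow_succ']
  have hrep : ∀ i : ℤ, ∃ m : ℕ, m < n ∧ r ^ i = r ^ m := by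
    intro i
    have hnz : (n : ℤ) ≠ 0 := by exact_mod_cast hn0.ne'
    have h1 : 0 ≤ i % (n : ℤ) := Int.emod_nonneg i hnz
    have h2 : i % (n : ℤ) < n := Int.emod_lt_of_pos i (by exact_mod_cast hn0)
    refine ⟨(i % (n : ℤ)).toNat, by omega, ?_⟩
    have key : r ^ ((n : ℤ) * (i / (n : ℤ))) = 1 := by
      rw [zpow_mul, zpow_natCast, hts, one_zpow]
    calc r ^ i = r ^ ((n : ℤ) * (i / (n : ℤ)) + i % (n : ℤ)) := by
          rw [Int.mul_ediv_add_emod]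
      _ = r ^ (i % (n : ℤ)) := by rw [zpow_add, key, one_mul]
      _ = r ^ (((i % (n : ℤ)).toNat : ℤ)) := by rw [Int.toNat_of_nonneg h1]
      _ = r ^ ((i % (n : ℤ)).toNat) := zpow_natCast r _
  have htrep : ∀ i : ℤ, r ^ i * s = s * r ^ (-i) := by
    intro i; rw [hconj (-i), neg_neg]
  have htrs : t = r * s := by
    rw [hr, mul_assoc, ← pow_two, hs, mul_one]
  have ht_r : ∀ i : ℤ, t * r ^ i = s * r ^ (i - 1) := by
    intro i
    calc t * r ^ i = r * (s * r ^ i) := by rw [htrs, mul_assoc]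
      _ = r ^ (1 : ℤ) * (r ^ (-i) * s) := by rw [hconj i, zpow_one]
      _ = r ^ (1 + -i) * s := by rw [← mul_assoc, ← zpow_add]
      _ = s * r ^ (i - 1) := by rw [hconj (i - 1)]; congr 1; ring
  have sinj : ∀ a b : ℕ, rcoset s (r ^ a) = rcoset s (r ^ b) → a ≡ b [MOD n] := by
    intro a b h
    rcases rcoset_eq_rep hs h with h' | h'
    · exact (hpow_iff a b).1 h'
    · exact absurd h' (cross a b)
  have tinj : ∀ a b : ℕ, rcoset t (s * r ^ a) = rcoset t (s * r ^ b) → a ≡ b [MOD n] := by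
    intro a b h
    rcases rcoset_eq_rep ht h with h' | h'
    · exact (hpow_iff a b).1 (mul_left_cancel h')
    · rw [htmul b] at h'
      exact absurd h'.symm (cross (b + 1) a)
  have inter_iff : ∀ a b : ℕ,
      (rcoset s (r ^ a) ∩ rcoset t (s * r ^ b)).Nonempty ↔
        (a ≡ b [MOD n] ∨ a ≡ b + 1 [MOD n]) := by
    intro a b
    constructor
    · rintro ⟨x, hx1, hx2⟩
      rcases (mem_rcoset_iff hs).1 hx1 with rfl | rfl
      · rcases (mem_rcoset_iff ht).1 hx2 with h | h
        · exact absurd h (cross a b)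
        · rw [htmul b] at h
          exact Or.inr ((hpow_iff a (b + 1)).1 h)
      · rcases (mem_rcoset_iff ht).1 hx2 with h | h
        · exact Or.inl ((hpow_iff a b).1 (mul_left_cancel h))
        · rw [htmul b] at h
          exact absurd h.symm (cross (b + 1) a)
    · rintro (h | h)
      · refine ⟨s * r ^ a, (mem_rcoset_iff hs).2 (Or.inr rfl), (mem_rcoset_iff ht).2 (Or.inl ?_)⟩
        rw [(hpow_iff a b).2 h]
      · refine ⟨r ^ a, (mem_rcoset_iff hs).2 (Or.inl rfl), (mem_rcoset_iff ht).2 (Or.inr ?_)⟩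
        rw [htmul b, (hpow_iff a (b + 1)).2 h]
  have hmod : ∀ a b : ℕ, a < n → b < n → (a ≡ b [MOD n] ↔ a = b) := by
    intro a b ha hb
    unfold Nat.ModEq
    rw [Nat.mod_eq_of_lt ha, Nat.mod_eq_of_lt hb]
  have hmod1 : ∀ a b : ℕ, a < n → b < n →
      (a ≡ b + 1 [MOD n] ↔ (a = b + 1 ∨ (a = 0 ∧ b + 1 = n))) := by
    intro a b ha hb
    unfold Nat.ModEq
    rw [Nat.mod_eq_of_lt ha]
    rcases Nat.lt_or_ge (b + 1) n with h | h
    · rw [Nat.mod_eq_of_lt h]; omega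
    · have hbn : b + 1 = n := by omega
      rw [hbn, Nat.mod_self]; omega
  haveI : NeZero (2 * n) := ⟨by omega⟩
  haveI : Fact (1 < 2 * n) := ⟨by omega⟩
  let f : ZMod (2 * n) →
      ({C : Set G // ∃ g, C = rcoset s g} ⊕ {C : Set G // ∃ g, C = rcoset t g}) :=
    fun k => if k.val % 2 = 0
      then Sum.inl ⟨rcoset s (r ^ (k.val / 2)), ⟨r ^ (k.val / 2), rfl⟩⟩
      else Sum.inr ⟨rcoset t (s * r ^ (k.val / 2)), ⟨s * r ^ (k.val / 2), rfl⟩⟩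
  have hfe : ∀ k : ZMod (2 * n), k.val % 2 = 0 →
      f k = Sum.inl ⟨rcoset s (r ^ (k.val / 2)), ⟨r ^ (k.val / 2), rfl⟩⟩ := by
    intro k hk; simp only [f, if_pos hk]
  have hfo : ∀ k : ZMod (2 * n), ¬ (k.val % 2 = 0) →
      f k = Sum.inr ⟨rcoset t (s * r ^ (k.val / 2)), ⟨s * r ^ (k.val / 2), rfl⟩⟩ := by
    intro k hk; simp only [f, if_neg hk]
  have hvlt : ∀ k : ZMod (2 * n), k.val < 2 * n := fun k => ZMod.val_lt k
  have hinj : Function.Injective f := by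
    intro k k' h
    apply ZMod.val_injective (2 * n)
    rcases Nat.eq_zero_or_pos (k.val % 2) with hk | hk
    · rcases Nat.eq_zero_or_pos (k'.val % 2) with hk' | hk'
      · rw [hfe k hk, hfe k' hk'] at h
        have h2 := congrArg Subtype.val (Sum.inl.inj h)
        have h3 := sinj _ _ h2
        have h4 : k.val / 2 = k'.val / 2 :=
          (hmod _ _ (by have := hvlt k; omega) (by have := hvlt k'; omega)).1 h3
        omega
      · rw [hfe k hk, hfo k' (by omega)] at h
        exact absurd h (by simp)
    · rcases Nat.eq_zero_or_pos (k'.val % 2) with hk' | hk'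
      · rw [hfo k (by omega), hfe k' hk'] at h
        exact absurd h (by simp)
      · rw [hfo k (by omega), hfo k' (by omega)] at h
        have h2 := congrArg Subtype.val (Sum.inr.inj h)
        have h3 := tinj _ _ h2
        have h4 : k.val / 2 = k'.val / 2 :=
          (hmod _ _ (by have := hvlt k; omega) (by have := hvlt k'; omega)).1 h3
        omega
  have hval2m : ∀ m : ℕ, m < n → (((2 * m : ℕ) : ZMod (2 * n)).val = 2 * m) :=
    fun m hm => ZMod.val_cast_of_lt (by omega)
  have hval2m1 : ∀ m : ℕ, m < n → (((2 * m + 1 : ℕ) : ZMod (2 * n)).val = 2 * m + 1) :=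
    fun m hm => ZMod.val_cast_of_lt (by omega)
  have hsurj : Function.Surjective f := by
    rintro (⟨C, g, rfl⟩ | ⟨C, g, rfl⟩)
    · obtain ⟨i, rfl | rfl⟩ := dih_classify hs ht hgen g
      · obtain ⟨m, hm, hrm⟩ := hrep i
        refine ⟨((2 * m : ℕ) : ZMod (2 * n)), ?_⟩
        rw [hfe _ (by rw [hval2m m hm]; omega)]
        apply congrArg Sum.inl
        apply Subtype.ext
        show rcoset s (r ^ (((2 * m : ℕ) : ZMod (2 * n)).val / 2)) = rcoset s (r ^ i)
        have he : 2 * m / 2 = m := by omega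
        rw [hval2m m hm, he, hrm]
      · obtain ⟨m, hm, hrm⟩ := hrep (-i)
        refine ⟨((2 * m : ℕ) : ZMod (2 * n)), ?_⟩
        rw [hfe _ (by rw [hval2m m hm]; omega)]
        apply congrArg Sum.inl
        apply Subtype.ext
        show rcoset s (r ^ (((2 * m : ℕ) : ZMod (2 * n)).val / 2)) = rcoset s (r ^ i * s)
        have he : 2 * m / 2 = m := by omega
        rw [htrep i, rcoset_smul, hval2m m hm, he, hrm]
    · obtain ⟨i, rfl | rfl⟩ := dih_classify hs ht hgen g
      · obtain ⟨m, hm, hrm⟩ := hrep (i - 1)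
        refine ⟨((2 * m + 1 : ℕ) : ZMod (2 * n)), ?_⟩
        rw [hfo _ (by rw [hval2m1 m hm]; omega)]
        apply congrArg Sum.inr
        apply Subtype.ext
        show rcoset t (s * r ^ (((2 * m + 1 : ℕ) : ZMod (2 * n)).val / 2)) = rcoset t (r ^ i)
        have hh : rcoset t (r ^ i) = rcoset t (t * r ^ i) := (rcoset_smul).symm
        have he : (2 * m + 1) / 2 = m := by omega
        rw [hh, ht_r i, hval2m1 m hm, he, hrm]
      · obtain ⟨m, hm, hrm⟩ := hrep (-i)
        refine ⟨((2 * m + 1 : ℕ) : ZMod (2 * n)), ?_⟩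
        rw [hfo _ (by rw [hval2m1 m hm]; omega)]
        apply congrArg Sum.inr
        apply Subtype.ext
        show rcoset t (s * r ^ (((2 * m + 1 : ℕ) : ZMod (2 * n)).val / 2)) =
          rcoset t (r ^ i * s)
        have he : (2 * m + 1) / 2 = m := by omega
        rw [htrep i, hval2m1 m hm, he, hrm]
  have hnoLL : ∀ A B, ¬ (gGraphPair s t).Adj (Sum.inl A) (Sum.inl B) := by
    intro A B h
    rw [gGraphPair, SimpleGraph.fromRel_adj] at h
    rcases h.2 with ⟨a, b, h1, h2, -⟩ | ⟨a, b, h1, h2, -⟩ <;> simp at h1 h2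
  have hnoRR : ∀ A B, ¬ (gGraphPair s t).Adj (Sum.inr A) (Sum.inr B) := by
    intro A B h
    rw [gGraphPair, SimpleGraph.fromRel_adj] at h
    rcases h.2 with ⟨a, b, h1, h2, -⟩ | ⟨a, b, h1, h2, -⟩ <;> simp at h1 h2
  have hadjLR : ∀ A B, (gGraphPair s t).Adj (Sum.inl A) (Sum.inr B) ↔
      ((A.1 : Set G) ∩ B.1).Nonempty := by
    intro A B
    rw [gGraphPair, SimpleGraph.fromRel_adj]
    constructor
    · rintro ⟨-, ⟨a, b, h1, h2, h3⟩ | ⟨a, b, h1, h2, -⟩⟩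
      · rw [Sum.inl.inj h1, Sum.inr.inj h2]; exact h3
      · simp at h2
    · intro h
      exact ⟨by simp, Or.inl ⟨A, B, rfl, rfl, h⟩⟩
  have hadjRL : ∀ A B, (gGraphPair s t).Adj (Sum.inr B) (Sum.inl A) ↔
      ((A.1 : Set G) ∩ B.1).Nonempty := by
    intro A B
    rw [SimpleGraph.adj_comm]
    exact hadjLR A B
  have hcadj : ∀ i j : ZMod (2 * n), (cycleG (2 * n)).Adj i j ↔
      i ≠ j ∧ (j = i + 1 ∨ i = j + 1) := by
    intro i j
    rw [cycleG, SimpleGraph.fromRel_adj]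
  have hsucc : ∀ i j : ZMod (2 * n), j = i + 1 ↔ j.val = (i.val + 1) % (2 * n) := by
    intro i j
    constructor
    · rintro rfl; rw [ZMod.val_add, ZMod.val_one]
    · intro h
      apply ZMod.val_injective
      rw [h, ZMod.val_add, ZMod.val_one]
  refine ⟨SimpleGraph.Iso.symm ⟨Equiv.ofBijective f ⟨hinj, hsurj⟩, ?_⟩⟩
  intro i j
  show (gGraphPair s t).Adj (f i) (f j) ↔ (cycleG (2 * n)).Adj i j
  have hvi := hvlt i
  have hvj := hvlt j
  have hdvd : (2 : ℕ) ∣ 2 * n := ⟨n, rfl⟩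
  rcases Nat.eq_zero_or_pos (i.val % 2) with hi | hi <;>
    rcases Nat.eq_zero_or_pos (j.val % 2) with hj | hj
  · rw [hfe i hi, hfe j hj, hcadj]
    simp only [hnoLL, false_iff]
    rintro ⟨hne', rfl | rfl⟩
    · have h1 : (i + 1).val % 2 = (i.val + 1) % 2 := by
        rw [ZMod.val_add, ZMod.val_one, Nat.mod_mod_of_dvd _ hdvd]
      omega
    · have h1 : (j + 1).val % 2 = (j.val + 1) % 2 := by
        rw [ZMod.val_add, ZMod.val_one, Nat.mod_mod_of_dvd _ hdvd]
      omega
  · set a := i.val / 2 with hadef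
    set b := j.val / 2 with hbdef
    have hia : i.val = 2 * a := by omega
    have hjb : j.val = 2 * b + 1 := by omega
    have ha : a < n := by omega
    have hb : b < n := by omega
    have hneij : i ≠ j := by
      intro hcon; rw [hcon] at hia; omega
    rw [hfe i hi, hfo j (by omega), hadjLR, inter_iff, hcadj,
      hmod a b ha hb, hmod1 a b ha hb]
    have hji : j = i + 1 ↔ a = b := by
      rw [hsucc, Nat.mod_eq_of_lt (by omega)]; omega
    have hij : i = j + 1 ↔ (a = b + 1 ∨ (a = 0 ∧ b + 1 = n)) := by
      rw [hsucc]
      rcases Nat.lt_or_ge (j.val + 1) (2 * n) with h | h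
      · rw [Nat.mod_eq_of_lt h]; omega
      · have h2 : j.val + 1 = 2 * n := by omega
        rw [h2, Nat.mod_self]; omega
    rw [hji, hij]
    exact ⟨fun h => ⟨hneij, h⟩, fun h => h.2⟩
  · set a := j.val / 2 with hadef
    set b := i.val / 2 with hbdef
    have hia : i.val = 2 * b + 1 := by omega
    have hjb : j.val = 2 * a := by omega
    have ha : a < n := by omega
    have hb : b < n := by omega
    have hneij : i ≠ j := by
      intro hcon; rw [hcon] at hia; omega
    rw [hfo i (by omega), hfe j hj, hadjRL, inter_iff, hcadj,
      hmod a b ha hb, hmod1 a b ha hb]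
    have hij : i = j + 1 ↔ a = b := by
      rw [hsucc, Nat.mod_eq_of_lt (by omega)]; omega
    have hji : j = i + 1 ↔ (a = b + 1 ∨ (a = 0 ∧ b + 1 = n)) := by
      rw [hsucc]
      rcases Nat.lt_or_ge (i.val + 1) (2 * n) with h | h
      · rw [Nat.mod_eq_of_lt h]; omega
      · have h2 : i.val + 1 = 2 * n := by omega
        rw [h2, Nat.mod_self]; omega
    rw [hji, hij]
    exact ⟨fun h => ⟨hneij, h.symm⟩, fun h => h.2.symm⟩
  · rw [hfo i (by omega), hfo j (by omega), hcadj]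
    simp only [hnoRR, false_iff]
    rintro ⟨hne', rfl | rfl⟩
    · have h1 : (i + 1).val % 2 = (i.val + 1) % 2 := by
        rw [ZMod.val_add, ZMod.val_one, Nat.mod_mod_of_dvd _ hdvd]
      omega
    · have h1 : (j + 1).val % 2 = (j.val + 1) % 2 := by
        rw [ZMod.val_add, ZMod.val_one, Nat.mod_mod_of_dvd _ hdvd]
      omega
end

section
/- Let SD_{8k} be the semi-dihedral group of order 8k with presentation ⟨a, b | a^{4k} = b² = e, ba = a^{2k−1}b⟩. Then every right coset of ⟨b⟩ intersects each of the two right cosets of ⟨a⟩ in exactly one element; hence the G-graph Γ(SD_{8k}, {a,b}) is isomorphic to the complete bipartite graph K_{2,4k}. -/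
lemma rcoset_zpow_mul {G : Type*} [Group G] (s : G) (m : ℤ) (g : G) :
    rcoset s (s ^ m * g) = rcoset s g := by
  ext x
  constructor
  · rintro ⟨n, rfl⟩
    exact ⟨n + m, by rw [zpow_add, mul_assoc]⟩
  · rintro ⟨n, rfl⟩
    exact ⟨n - m, by rw [sub_eq_add_neg, zpow_add, zpow_neg, mul_assoc, inv_mul_cancel_left]⟩

lemma nat_card_singleton {G : Type*} (S : Set G) (z : G) (h : S = {z}) :
    Nat.card ↥S = 1 := by
  subst h
  simp [Nat.card_coe_set_eq]

/-- in the semi-dihedral group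
`SD_{8k} = ⟨a, b | a^{4k} = b² = e, ba = a^{2k−1}b⟩` of order `8k`, every right coset of
`⟨b⟩` meets each of the two right cosets of `⟨a⟩` in exactly one element; hence the
G-graph `Γ(SD_{8k}, {a,b})` is isomorphic to the complete bipartite graph `K_{2,4k}`. -/
theorem gGraph_semidihedral {G : Type*} [Group G] [Fintype G]
    (k : ℕ) (hk : 1 ≤ k) (a b : G) (hcard : Fintype.card G = 8 * k)
    (ha : orderOf a = 4 * k) (hb : orderOf b = 2)
    (hrel : b * a = a ^ (2 * k - 1) * b)
    (hgen : Subgroup.closure ({a, b} : Set G) = ⊤) :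
    (∀ x y : G, Nat.card ↥(rcoset a x ∩ rcoset b y) = 1) ∧
      Nonempty (gGraphPair a b ≃g completeBipartiteGraph (Fin 2) (Fin (4 * k))) := by
  -- basic consequences of the relations
  have hb1 : b * b = 1 := by
    have := pow_orderOf_eq_one b
    rwa [hb, pow_two] at this
  have hbinv : b⁻¹ = b := by
    rw [inv_eq_iff_mul_eq_one, hb1]
  set K : ℤ := ((2 * k - 1 : ℕ) : ℤ) with hK
  have hconj : ∀ n : ℤ, b * a ^ n = a ^ (K * n) * b := by
    intro n
    have h1 : b * a * b⁻¹ = a ^ K := by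
      rw [hbinv, hrel, mul_assoc, hb1, mul_one, hK, zpow_natCast]
    have h2 : b * a ^ n * b⁻¹ = a ^ (K * n) := by
      rw [← conj_zpow, h1, ← zpow_mul]
    rw [← h2]
    group
  have hflip : ∀ m : ℤ, b * (a ^ m * b) = a ^ (K * m) := by
    intro m
    rw [← mul_assoc, hconj m, mul_assoc, hb1, mul_one]
  -- b is not a power of a
  have hbA : ∀ m : ℤ, b ≠ a ^ m := by
    intro m hm
    have hsub : Subgroup.closure ({a, b} : Set G) ≤ Subgroup.zpowers a := by
      rw [Subgroup.closure_le]
      rintro x (rfl | rfl)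
      · exact Subgroup.mem_zpowers _
      · exact ⟨m, hm.symm⟩
    have htop : Subgroup.zpowers a = ⊤ := top_le_iff.mp (hgen ▸ hsub)
    have hc : Nat.card (Subgroup.zpowers a) = Nat.card G := by
      rw [htop]
      exact Subgroup.card_top
    rw [Nat.card_zpowers, ha, Nat.card_eq_fintype_card, hcard] at hc
    omega
  have hne : ∀ m n : ℤ, a ^ m ≠ a ^ n * b := by
    intro m n h
    have : a ^ (m - n) = b := by
      rw [sub_eq_neg_add, zpow_add, h]
      group
    exact hbA _ this.symm
  -- every element is a^m or a^m * b
  have hG : ∀ g : G, ∃ m : ℤ, g = a ^ m ∨ g = a ^ m * b := by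
    have hH : ∀ g ∈ Subgroup.closure ({a, b} : Set G),
        ∃ m : ℤ, g = a ^ m ∨ g = a ^ m * b := by
      intro g hg
      induction hg using Subgroup.closure_induction with
      | mem x hx =>
        rcases hx with rfl | rfl
        · exact ⟨1, Or.inl (zpow_one _).symm⟩
        · exact ⟨0, Or.inr (by simp)⟩
      | one => exact ⟨0, Or.inl (by simp)⟩
      | mul x y _ _ hx hy =>
        obtain ⟨m, rfl | rfl⟩ := hx <;> obtain ⟨n, rfl | rfl⟩ := hy
        · exact ⟨m + n, Or.inl (zpow_add a m n).symm⟩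
        · exact ⟨m + n, Or.inr (by rw [zpow_add, mul_assoc])⟩
        · refine ⟨m + K * n, Or.inr ?_⟩
          rw [mul_assoc, hconj n, ← mul_assoc, ← zpow_add]
        · refine ⟨m + K * n, Or.inl ?_⟩
          rw [mul_assoc, hflip n, ← zpow_add]
      | inv x _ hx =>
        obtain ⟨m, rfl | rfl⟩ := hx
        · exact ⟨-m, Or.inl (zpow_neg a m).symm⟩
        · refine ⟨K * (-m), Or.inr ?_⟩
          rw [← hconj, mul_inv_rev, hbinv, zpow_neg]
    intro g
    exact hH g (by rw [hgen]; trivial)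
  -- membership in rcoset b y
  have hb2 : b ^ (2 : ℤ) = 1 := by
    rw [show (2 : ℤ) = ((2 : ℕ) : ℤ) from rfl, zpow_natCast, ← hb, pow_orderOf_eq_one]
  have hmemB : ∀ y z : G, z ∈ rcoset b y ↔ z = y ∨ z = b * y := by
    intro y z
    constructor
    · rintro ⟨n, rfl⟩
      rcases Int.even_or_odd n with ⟨q, hq⟩ | ⟨q, hq⟩
      · left
        rw [hq, ← two_mul, zpow_mul, hb2, one_zpow, one_mul]
      · right
        rw [hq, zpow_add, zpow_mul, hb2, one_zpow, one_mul, zpow_one]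
    · rintro (rfl | rfl)
      exacts [⟨0, by simp⟩, ⟨1, by simp⟩]
  -- PART 1
  have part1 : ∀ x y : G, Nat.card ↥(rcoset a x ∩ rcoset b y) = 1 := by
    intro x y
    obtain ⟨p, rfl | rfl⟩ := hG x <;> obtain ⟨q, rfl | rfl⟩ := hG y
    · -- x = a^p, y = a^q
      apply nat_card_singleton _ (a ^ q)
      ext z
      simp only [Set.mem_inter_iff, Set.mem_singleton_iff]
      constructor
      · rintro ⟨⟨n, rfl⟩, hz2⟩
        rcases (hmemB _ _).mp hz2 with h | h
        · exact h
        · rw [hconj q, ← zpow_add] at h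
          exact absurd h (hne _ _)
      · rintro rfl
        exact ⟨⟨q - p, by rw [← zpow_add, sub_add_cancel]⟩, (hmemB _ _).mpr (Or.inl rfl)⟩
    · -- x = a^p, y = a^q * b
      apply nat_card_singleton _ (a ^ (K * q))
      ext z
      simp only [Set.mem_inter_iff, Set.mem_singleton_iff]
      constructor
      · rintro ⟨⟨n, rfl⟩, hz2⟩
        rcases (hmemB _ _).mp hz2 with h | h
        · rw [← zpow_add] at h
          exact absurd h (hne _ _)
        · rw [hflip q] at h
          exact h
      · rintro rfl
        exact ⟨⟨K * q - p, by rw [← zpow_add, sub_add_cancel]⟩,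
          (hmemB _ _).mpr (Or.inr (hflip q).symm)⟩
    · -- x = a^p * b, y = a^q
      apply nat_card_singleton _ (a ^ (K * q) * b)
      ext z
      simp only [Set.mem_inter_iff, Set.mem_singleton_iff]
      constructor
      · rintro ⟨⟨n, rfl⟩, hz2⟩
        rcases (hmemB _ _).mp hz2 with h | h
        · rw [← mul_assoc, ← zpow_add] at h
          exact absurd h.symm (hne _ _)
        · rw [hconj q] at h
          exact h
      · rintro rfl
        refine ⟨⟨K * q - p, by rw [← mul_assoc, ← zpow_add, sub_add_cancel]⟩,
          (hmemB _ _).mpr (Or.inr (hconj q).symm)⟩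
    · -- x = a^p * b, y = a^q * b
      apply nat_card_singleton _ (a ^ q * b)
      ext z
      simp only [Set.mem_inter_iff, Set.mem_singleton_iff]
      constructor
      · rintro ⟨⟨n, rfl⟩, hz2⟩
        rcases (hmemB _ _).mp hz2 with h | h
        · exact h
        · rw [hflip q, ← mul_assoc, ← zpow_add] at h
          exact absurd h.symm (hne _ _)
      · rintro rfl
        exact ⟨⟨q - p, by rw [← mul_assoc, ← zpow_add, sub_add_cancel]⟩,
          (hmemB _ _).mpr (Or.inl rfl)⟩
  refine ⟨part1, ?_⟩
  -- nonemptiness of all intersections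
  have hnonempty : ∀ x y : G, (rcoset a x ∩ rcoset b y).Nonempty := by
    intro x y
    rcases Set.eq_empty_or_nonempty (rcoset a x ∩ rcoset b y) with he | he
    · have h := part1 x y
      rw [he] at h
      simp at h
    · exact he
  -- the two right cosets of ⟨a⟩
  have hA1 : ∀ m : ℤ, rcoset a (a ^ m) = rcoset a 1 := by
    intro m
    rw [show (a : G) ^ m = a ^ m * 1 from (mul_one _).symm, rcoset_zpow_mul]
  have hA2 : ∀ m : ℤ, rcoset a (a ^ m * b) = rcoset a b := fun m => rcoset_zpow_mul a m b
  have hAne : rcoset a 1 ≠ rcoset a b := by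
    intro h
    have hbmem : b ∈ rcoset a 1 := h ▸ ⟨0, by simp⟩
    obtain ⟨n, hn⟩ := hbmem
    exact hbA n (by simpa using hn)
  let fA : Fin 2 → {C : Set G // ∃ g, C = rcoset a g} :=
    ![⟨rcoset a 1, 1, rfl⟩, ⟨rcoset a b, b, rfl⟩]
  have hfA : Function.Bijective fA := by
    constructor
    · intro i j h
      fin_cases i <;> fin_cases j <;> simp_all [fA]
    · rintro ⟨C, g, rfl⟩
      obtain ⟨m, rfl | rfl⟩ := hG g
      · refine ⟨0, Subtype.ext ?_⟩
        show rcoset a 1 = rcoset a (a ^ m)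
        exact (hA1 m).symm
      · refine ⟨1, Subtype.ext ?_⟩
        show rcoset a b = rcoset a (a ^ m * b)
        exact (hA2 m).symm
  -- the 4k right cosets of ⟨b⟩
  have haeq : ∀ i j : ℤ, ((4 * k : ℕ) : ℤ) ∣ i - j → (a : G) ^ i = a ^ j := by
    intro i j hd
    rw [← orderOf_dvd_sub_iff_zpow_eq_zpow, ha]
    exact hd
  let fB : Fin (4 * k) → {C : Set G // ∃ g, C = rcoset b g} := fun i =>
    ⟨rcoset b (a ^ ((i : ℕ) : ℤ)), a ^ ((i : ℕ) : ℤ), rfl⟩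
  have hfB : Function.Bijective fB := by
    constructor
    · intro i j h
      have h' : rcoset b ((a : G) ^ ((i : ℕ) : ℤ)) = rcoset b (a ^ ((j : ℕ) : ℤ)) :=
        congrArg Subtype.val h
      have hm : (a : G) ^ ((i : ℕ) : ℤ) ∈ rcoset b (a ^ ((j : ℕ) : ℤ)) := by
        rw [← h']
        exact ⟨0, by simp⟩
      rcases (hmemB _ _).mp hm with h2 | h2
      · have hd : (orderOf a : ℤ) ∣ ((i : ℕ) : ℤ) - ((j : ℕ) : ℤ) :=
          orderOf_dvd_sub_iff_zpow_eq_zpow.mpr h2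
        rw [ha] at hd
        have hd0 : ((i : ℕ) : ℤ) - ((j : ℕ) : ℤ) = 0 := by
          refine Int.eq_zero_of_dvd_of_natAbs_lt_natAbs hd ?_
          have h1 := i.isLt
          have h2 := j.isLt
          omega
        have h1 := i.isLt
        have h2 := j.isLt
        exact Fin.ext (by omega)
      · rw [hconj] at h2
        exact absurd h2 (hne _ _)
    · have hred : ∀ m : ℤ, ∃ i : Fin (4 * k),
          rcoset b ((a : G) ^ m) = rcoset b (a ^ ((i : ℕ) : ℤ)) := by
        intro m
        have h4 : (0 : ℤ) < ((4 * k : ℕ) : ℤ) := by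
          have : (0 : ℕ) < 4 * k := by omega
          exact_mod_cast this
        have hr0 : 0 ≤ m % ((4 * k : ℕ) : ℤ) := Int.emod_nonneg m (by omega)
        have hrlt : m % ((4 * k : ℕ) : ℤ) < ((4 * k : ℕ) : ℤ) := Int.emod_lt_of_pos m h4
        have hdvd : ((4 * k : ℕ) : ℤ) ∣ m - m % ((4 * k : ℕ) : ℤ) :=
          Int.dvd_self_sub_of_emod_eq rfl
        have hexp : (((m % ((4 * k : ℕ) : ℤ)).toNat : ℕ) : ℤ) = m % ((4 * k : ℕ) : ℤ) :=
          Int.toNat_of_nonneg hr0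
        refine ⟨⟨(m % ((4 * k : ℕ) : ℤ)).toNat, by omega⟩, ?_⟩
        show rcoset b (a ^ m) = rcoset b (a ^ (((m % ((4 * k : ℕ) : ℤ)).toNat : ℕ) : ℤ))
        rw [hexp, haeq _ _ hdvd]
      rintro ⟨C, g, rfl⟩
      obtain ⟨m, rfl | rfl⟩ := hG g
      · obtain ⟨i, hi⟩ := hred m
        refine ⟨i, Subtype.ext ?_⟩
        show rcoset b (a ^ ((i : ℕ) : ℤ)) = rcoset b (a ^ m)
        exact hi.symm
      · obtain ⟨i, hi⟩ := hred (K * m)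
        refine ⟨i, Subtype.ext ?_⟩
        show rcoset b (a ^ ((i : ℕ) : ℤ)) = rcoset b (a ^ m * b)
        have hc : rcoset b (b ^ (1 : ℤ) * (a ^ m * b)) = rcoset b (a ^ m * b) :=
          rcoset_zpow_mul b 1 _
        rw [zpow_one, hflip m] at hc
        rw [← hi, hc]
  -- adjacency facts for the G-graph
  have hGadj_lr : ∀ (C : {C : Set G // ∃ g, C = rcoset a g})
      (D : {C : Set G // ∃ g, C = rcoset b g}),
      (gGraphPair a b).Adj (Sum.inl C) (Sum.inr D) := by
    intro C D
    rw [gGraphPair, SimpleGraph.fromRel_adj]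
    refine ⟨by simp, Or.inl ⟨C, D, rfl, rfl, ?_⟩⟩
    obtain ⟨Cs, gC, hgC⟩ := C
    obtain ⟨Ds, gD, hgD⟩ := D
    simp only [hgC, hgD]
    exact hnonempty gC gD
  have hGadj_ll : ∀ C D : {C : Set G // ∃ g, C = rcoset a g},
      ¬ (gGraphPair a b).Adj (Sum.inl C) (Sum.inl D) := by
    intro C D h
    rw [gGraphPair, SimpleGraph.fromRel_adj] at h
    rcases h.2 with ⟨a', b', h1, h2, -⟩ | ⟨a', b', h1, h2, -⟩ <;> simp at h1 h2
  have hGadj_rr : ∀ C D : {C : Set G // ∃ g, C = rcoset b g},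
      ¬ (gGraphPair a b).Adj (Sum.inr C) (Sum.inr D) := by
    intro C D h
    rw [gGraphPair, SimpleGraph.fromRel_adj] at h
    rcases h.2 with ⟨a', b', h1, h2, -⟩ | ⟨a', b', h1, h2, -⟩ <;> simp at h1 h2
  -- assemble the graph isomorphism
  let eA := Equiv.ofBijective fA hfA
  let eB := Equiv.ofBijective fB hfB
  refine ⟨⟨Equiv.sumCongr eA.symm eB.symm, ?_⟩⟩
  intro v w
  rcases v with C | C <;> rcases w with D | D
  · refine iff_of_false ?_ (hGadj_ll C D)
    simp [completeBipartiteGraph]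
  · refine iff_of_true ?_ (hGadj_lr C D)
    simp [completeBipartiteGraph]
  · refine iff_of_true ?_ ((hGadj_lr D C).symm)
    simp [completeBipartiteGraph]
  · refine iff_of_false ?_ (hGadj_rr C D)
    simp [completeBipartiteGraph]
end
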